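/- In the Newcomb-with-looking environment with ε = 0.01, the two-step evidential values from the empty history of the six deterministic policies — curious one-boxer (look, always one-box), curious two-boxer (look, always two-box), incurious one-boxer (not look, one-box), incurious two-boxer (not look, two-box), paradox-lover (look, one-box iff empty), fatalistic (look, one-box iff full) — are: action-evidential values V^{aev} = 500000, 501000, 990000, 11000, 500500, 500500 respectively, and policy-evidential values V^{pev} = 990000, 11000, 990000, 11000, 500500, 500500 respectively. In particular the incurious one-boxer uniquely maximizes V^{aev}, while the curious and incurious one-boxers maximize V^{pev}. -/

import Mathlib

/-! # A framework for physicalistic sequential decision making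

Following Everitt, Leike, Hutter, "Sequential Extensions of Causal and
Evidential Decision Theory".

An environment model `μ` over hidden states `S`, actions `A`, percepts `E`
with lifetime `m` is given in causally factored form
`μ(s, æ_{1:m}) = μ(s) ∏_i μ(a_i | s, æ_{<i}) μ(e_i | s, æ_{<i} a_i)`.
Histories are lists of action-percept pairs. -/

noncomputable section

variable {S A E : Type*}

/-- The product `∏ μ(a_i | s, æ_{<i}) μ(e_i | s, æ_{<i}a_i)` of the factors along the
continuation `rest` of the history-prefix `pre`. -/
def wSuf (pa : S → List (A × E) → A → ℝ) (pe : S → List (A × E) → A → E → ℝ)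
    (s : S) : List (A × E) → List (A × E) → ℝ
  | _, [] => 1
  | pre, (a, e) :: rest => pa s pre a * pe s pre a e * wSuf pa pe s (pre ++ [(a, e)]) rest

/-- A physicalistic environment model with lifetime `m`: a prior pmf on the hidden state,
together with conditional pmfs for the action and the percept at every time step
(i.e. after every history of length `< m`), which is action-positive. -/
structure Env (S A E : Type*) [Fintype S] [Fintype A] [Fintype E] (m : ℕ) where
  /-- the prior `μ(s)` over the hidden state -/
  prior : S → ℝ
  /-- the action factor `μ(a_t | s, æ_{<t})` -/
  pa : S → List (A × E) → A → ℝ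
  /-- the percept factor `μ(e_t | s, æ_{<t}a_t)` -/
  pe : S → List (A × E) → A → E → ℝ
  prior_nonneg : ∀ s, 0 ≤ prior s
  prior_sum : ∑ s, prior s = 1
  pa_nonneg : ∀ s h a, 0 ≤ pa s h a
  pa_sum : ∀ s (h : List (A × E)), h.length < m → ∑ a, pa s h a = 1
  pe_nonneg : ∀ s h a e, 0 ≤ pe s h a e
  pe_sum : ∀ s (h : List (A × E)) (a : A), h.length < m → ∑ e, pe s h a e = 1
  /-- action-positivity: `μ(æ_{<t} | s) > 0` implies `μ(a_t | s, æ_{<t}) > 0` -/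
  action_pos : ∀ s (h : List (A × E)) (a : A), h.length < m →
    0 < wSuf pa pe s [] h → 0 < pa s h a

variable [Fintype S] [Fintype A] [Fintype E] {m : ℕ}

/-- Event: the trajectory `τ = æ_{1:m}` extends the history `h = æ_{<t}`. -/
def ExtendsH (h : List (A × E)) (τ : Fin m → A × E) : Prop :=
  (List.ofFn τ).take h.length = h

/-- Event: the actions of the trajectory `τ` from (0-based) time `t0` on follow
the deterministic policy `π`. -/
def FollowsFrom (π : List (A × E) → A) (t0 : ℕ) (τ : Fin m → A × E) : Prop :=
  ∀ i : Fin m, t0 ≤ (i : ℕ) → (τ i).1 = π ((List.ofFn τ).take (i : ℕ))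

/-- Event: the action at (0-based) time `k` is `a`. -/
def ActAt (k : ℕ) (a : A) (τ : Fin m → A × E) : Prop :=
  ∀ hk : k < m, (τ ⟨k, hk⟩).1 = a

/-- Event: the percept at (0-based) time `k` is `e`. -/
def PerAt (k : ℕ) (e : E) (τ : Fin m → A × E) : Prop :=
  ∀ hk : k < m, (τ ⟨k, hk⟩).2 = e

namespace Env

/-- The joint probability `μ(s, æ_{<t})`, given directly by the causal factorization. -/
def hw (μ : Env S A E m) (s : S) (h : List (A × E)) : ℝ :=
  μ.prior s * wSuf μ.pa μ.pe s [] h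

/-- The marginal probability `μ(æ_{<t})` of a history. -/
def probH (μ : Env S A E m) (h : List (A × E)) : ℝ := ∑ s, μ.hw s h

/-- The probability `μ(æ_{<t}a_t)` of a history followed by an action. -/
def probHA (μ : Env S A E m) (h : List (A × E)) (a : A) : ℝ :=
  ∑ s, μ.hw s h * μ.pa s h a

/-- The action-evidential conditional `μ(e_t | æ_{<t}a_t)`. -/
def condE (μ : Env S A E m) (h : List (A × E)) (a : A) (e : E) : ℝ :=
  μ.probH (h ++ [(a, e)]) / μ.probHA h a

/-- The posterior `μ(s | æ_{<t})` over the hidden state. -/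
def condS (μ : Env S A E m) (s : S) (h : List (A × E)) : ℝ :=
  μ.hw s h / μ.probH h

/-- The posterior `μ(s | æ_{<t}a_t)` over the hidden state, also conditioning on `a_t`. -/
def condSA (μ : Env S A E m) (s : S) (h : List (A × E)) (a : A) : ℝ :=
  μ.hw s h * μ.pa s h a / μ.probHA h a

/-- The conditional `μ(e_t | s, æ_{<t}a_t)` given the hidden state. -/
def condESA (μ : Env S A E m) (s : S) (h : List (A × E)) (a : A) (e : E) : ℝ :=
  μ.hw s (h ++ [(a, e)]) / (μ.hw s h * μ.pa s h a)

/-! ## Causal interventions -/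

/-- The intervened joint `μ(s, æ_{<t}, e_t | do(a_t := b))`: the action factor at time `t`
is deleted and `a_t` is substituted by `b`. -/
def doJoint (μ : Env S A E m) (s : S) (h : List (A × E)) (b : A) (e : E) : ℝ :=
  μ.hw s h * μ.pe s h b e

/-- `μ(æ_{<t}, e_t | do(a_t := b))`, marginalizing the hidden state. -/
def doNum (μ : Env S A E m) (h : List (A × E)) (b : A) (e : E) : ℝ :=
  ∑ s, μ.doJoint s h b e

/-- `μ(æ_{<t} | do(a_t := b))`, marginalizing the hidden state and the percept `e_t`. -/
def doDen (μ : Env S A E m) (h : List (A × E)) (b : A) : ℝ :=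
  ∑ e, μ.doNum h b e

/-- The causal conditional `μ(e_t | æ_{<t}, do(a_t := b))`. -/
def condDo (μ : Env S A E m) (h : List (A × E)) (b : A) (e : E) : ℝ :=
  μ.doNum h b e / μ.doDen h b

/-- Product of the percept factors along the percepts `es`, all action factors being
deleted and the actions substituted according to the policy `π`:
the intervened conditional `μ(e_{t:k} | s, æ_{<t}, do(a_t := π(æ_{<t}), …))`. -/
def doPE (μ : Env S A E m) (π : List (A × E) → A) (s : S) :
    List (A × E) → List E → ℝ
  | _, [] => 1
  | h, e :: es => μ.pe s h (π h) e * μ.doPE π s (h ++ [(π h, e)]) es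

/-- `μ(æ_{<t}, e_{t:k} | do(a_t := π(æ_{<t}), …, a_m := π(æ_{<m})))` where the percepts
`e_{t:k}` are given by the list `es`. -/
def doPolNum (μ : Env S A E m) (π : List (A × E) → A) (h : List (A × E))
    (es : List E) : ℝ :=
  ∑ s, μ.hw s h * μ.doPE π s h es

/-- `μ(æ_{<t} | do(a_t := π(æ_{<t}), …, a_m := π(æ_{<m})))`, marginalizing all the
intervened percepts `e_{t:m}`. -/
def doPolDen (μ : Env S A E m) (π : List (A × E) → A) (h : List (A × E)) : ℝ :=
  ∑ es : Fin (m - h.length) → E, μ.doPolNum π h (List.ofFn es)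

/-! ## Probabilities of trajectory events -/

open Classical in
/-- The probability of an event `Q` over full trajectories `æ_{1:m}`. -/
def evP (μ : Env S A E m) (Q : (Fin m → A × E) → Prop) : ℝ :=
  ∑ τ : Fin m → A × E, if Q τ then μ.probH (List.ofFn τ) else 0

open Classical in
/-- The joint probability of the hidden state `s` and an event `Q` over full
trajectories `æ_{1:m}`. -/
def evPS (μ : Env S A E m) (s : S) (Q : (Fin m → A × E) → Prop) : ℝ :=
  ∑ τ : Fin m → A × E, if Q τ then μ.hw s (List.ofFn τ) else 0

/-- The policy-evidential conditional `μ(e_t | æ_{<t}, π_{t:m})`, conditioning on the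
event that the history extends `æ_{<t}` and the actions from time `t` to `m` follow `π`. -/
def condPev (μ : Env S A E m) (π : List (A × E) → A) (h : List (A × E)) (e : E) : ℝ :=
  μ.evP (fun τ => ExtendsH h τ ∧ FollowsFrom π h.length τ ∧ PerAt h.length e τ) /
    μ.evP (fun τ => ExtendsH h τ ∧ FollowsFrom π h.length τ)

/-- The posterior `μ(s | æ_{<t}, π_{t:m})` over the hidden state given the policy event. -/
def condSPev (μ : Env S A E m) (π : List (A × E) → A) (s : S) (h : List (A × E)) : ℝ :=
  μ.evPS s (fun τ => ExtendsH h τ ∧ FollowsFrom π h.length τ) /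
    μ.evP (fun τ => ExtendsH h τ ∧ FollowsFrom π h.length τ)

/-- The conditional `μ(e_t | s, æ_{<t}, π_{t:m})` given the hidden state and the
policy event. -/
def condESPev (μ : Env S A E m) (π : List (A × E) → A) (s : S) (h : List (A × E))
    (e : E) : ℝ :=
  μ.evPS s (fun τ => ExtendsH h τ ∧ FollowsFrom π h.length τ ∧ PerAt h.length e τ) /
    μ.evPS s (fun τ => ExtendsH h τ ∧ FollowsFrom π h.length τ)

/-- The conditional `μ(e_t | æ_{<t}a_t, π_{t+1:m})` used in the recursive definition of
the policy-evidential value. -/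
def condPevA (μ : Env S A E m) (π : List (A × E) → A) (h : List (A × E)) (a : A)
    (e : E) : ℝ :=
  μ.evP (fun τ => ExtendsH (h ++ [(a, e)]) τ ∧ FollowsFrom π (h.length + 1) τ) /
    μ.evP (fun τ => ExtendsH h τ ∧ ActAt h.length a τ ∧ FollowsFrom π (h.length + 1) τ)

/-! ## Value functions

The recursions are driven by the fuel `n`, the number of remaining time steps: the
value of a history `æ_{<t}` (for `t ≤ m + 1`) or of `æ_{<t}a_t` (for `t ≤ m`) within
lifetime `m` uses fuel `n = m - (t - 1)`, and the value is `0` for `t > m`. -/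

/-- The action-evidential value `V^{aev,π}_{μ}(æ_{<t}a_t)` (with `n = m - t + 1`):
`V^{aev,π}(æ_{<t}a_t) = ∑_{e_t} μ(e_t | æ_{<t}a_t) (u(e_t) + V^{aev,π}(æ_{<t}a_te_t))`. -/
def VaevA (μ : Env S A E m) (u : E → ℝ) (π : List (A × E) → A) :
    ℕ → List (A × E) → A → ℝ
  | 0, _, _ => 0
  | n + 1, h, a =>
    ∑ e, μ.condE h a e * (u e + μ.VaevA u π n (h ++ [(a, e)]) (π (h ++ [(a, e)])))

/-- The action-evidential value of a history, `V^{aev,π}(æ_{<t}) = V^{aev,π}(æ_{<t}π(æ_{<t}))`. -/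
def Vaev (μ : Env S A E m) (u : E → ℝ) (π : List (A × E) → A) (n : ℕ)
    (h : List (A × E)) : ℝ :=
  μ.VaevA u π n h (π h)

/-- The policy-evidential value `V^{pev,π}_{μ}(æ_{<t}a_t)` (with `n = m - t + 1`):
`V^{pev,π}(æ_{<t}a_t) = ∑_{e_t} μ(e_t | æ_{<t}a_t, π_{t+1:m}) (u(e_t) + V^{pev,π}(æ_{<t}a_te_t))`. -/
def VpevA (μ : Env S A E m) (u : E → ℝ) (π : List (A × E) → A) :
    ℕ → List (A × E) → A → ℝ
  | 0, _, _ => 0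
  | n + 1, h, a =>
    ∑ e, μ.condPevA π h a e * (u e + μ.VpevA u π n (h ++ [(a, e)]) (π (h ++ [(a, e)])))

/-- The policy-evidential value of a history. -/
def Vpev (μ : Env S A E m) (u : E → ℝ) (π : List (A × E) → A) (n : ℕ)
    (h : List (A × E)) : ℝ :=
  μ.VpevA u π n h (π h)

/-- The causal value `V^{cau,π}_{μ}(æ_{<t}a_t)` (with `n = m - t + 1`):
`V^{cau,π}(æ_{<t}a_t) = ∑_{e_t} μ(e_t | æ_{<t}, do(a_t)) (u(e_t) + V^{cau,π}(æ_{<t}a_te_t))`. -/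
def VcauA (μ : Env S A E m) (u : E → ℝ) (π : List (A × E) → A) :
    ℕ → List (A × E) → A → ℝ
  | 0, _, _ => 0
  | n + 1, h, a =>
    ∑ e, μ.condDo h a e * (u e + μ.VcauA u π n (h ++ [(a, e)]) (π (h ++ [(a, e)])))

/-- The causal value of a history. -/
def Vcau (μ : Env S A E m) (u : E → ℝ) (π : List (A × E) → A) (n : ℕ)
    (h : List (A × E)) : ℝ :=
  μ.VcauA u π n h (π h)

/-! ## Products of one-step conditionals, for the iterative forms -/

/-- `∏_{i=t}^{k} μ(e_i | æ_{<i}a_i)` with `a_i := π(æ_{<i})`, the percepts `e_{t:k}`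
being given by the list `es`. -/
def prodAev (μ : Env S A E m) (π : List (A × E) → A) : List (A × E) → List E → ℝ
  | _, [] => 1
  | h, e :: es => μ.condE h (π h) e * μ.prodAev π (h ++ [(π h, e)]) es

/-- `∏_{i=t}^{k} μ(e_i | æ_{<i}, π_{i:m})`. -/
def prodPev (μ : Env S A E m) (π : List (A × E) → A) : List (A × E) → List E → ℝ
  | _, [] => 1
  | h, e :: es => μ.condPev π h e * μ.prodPev π (h ++ [(π h, e)]) es

/-- `∏_{i=t}^{k} μ(e_i | æ_{<i}, do(a_i))` with `a_i := π(æ_{<i})`. -/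
def prodCau (μ : Env S A E m) (π : List (A × E) → A) : List (A × E) → List E → ℝ
  | _, [] => 1
  | h, e :: es => μ.condDo h (π h) e * μ.prodCau π (h ++ [(π h, e)]) es

/-- `∏_{i=t}^{k} ∑_{s} μ(s | æ_{<i}) μ(e_i | s, æ_{<i}a_i)` with `a_i := π(æ_{<i})`. -/
def prodCauX (μ : Env S A E m) (π : List (A × E) → A) : List (A × E) → List E → ℝ
  | _, [] => 1
  | h, e :: es =>
    (∑ s, μ.condS s h * μ.condESA s h (π h) e) * μ.prodCauX π (h ++ [(π h, e)]) es

end Env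

end

/-! ## The Newcomb-with-looking environment (lifetime m = 2, ε = 0.01)

Hidden states `E` (opaque box empty) / `F` (full), prior 1/2 each. At step 1 the agent
looks into the box (`L := B₁`) or not (`N := B₂`), each with probability 1/2; looking
deterministically reveals the hidden state (percept `pE` or `pF`), not looking yields
percept `p0`; these percepts have utility 0. At step 2 the agent one-boxes (`B₁`) or
two-boxes (`B₂`); the predictor has accuracy `1 - ε = 0.99`:
`μ(B₁ | F, æ₁) = 0.99` and `μ(B₁ | E, æ₁) = 0.01`. The final percept is deterministic
with utilities 0 for `(E, B₁)`, 1000 for `(E, B₂)`, 1000000 for `(F, B₁)` and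
1001000 for `(F, B₂)`. -/

/-- Hidden states: opaque box empty (`E`) or full (`F`). -/
inductive LSt | E | F
  deriving DecidableEq

instance : Fintype LSt :=
  ⟨{LSt.E, LSt.F}, by intro x; cases x <;> simp⟩

/-- Actions: `B₁` (step 1: look; step 2: one-box), `B₂` (step 1: not look;
step 2: two-box). -/
inductive LAct | B₁ | B₂
  deriving DecidableEq

instance : Fintype LAct :=
  ⟨{LAct.B₁, LAct.B₂}, by intro x; cases x <;> simp⟩

/-- Percepts: box revealed empty (`pE`), box revealed full (`pF`), nothing seen (`p0`),
and the four payoffs. -/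
inductive LPer | pE | pF | p0 | O0 | OT | OM | OMT
  deriving DecidableEq

instance : Fintype LPer :=
  ⟨{LPer.pE, LPer.pF, LPer.p0, LPer.O0, LPer.OT, LPer.OM, LPer.OMT}, by
    intro x; cases x <;> simp⟩

/-- The action factors `μ(a_t | s, æ_{<t})`: uniform at step 1, prediction accuracy
`1 - ε = 0.99` at step 2. -/
noncomputable def nlPa : LSt → List (LAct × LPer) → LAct → ℝ
  | _, [], _ => 1 / 2
  | LSt.F, _, LAct.B₁ => 0.99
  | LSt.F, _, LAct.B₂ => 0.01
  | LSt.E, _, LAct.B₁ => 0.01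
  | LSt.E, _, LAct.B₂ => 0.99

/-- The percept factors `μ(e_t | s, æ_{<t}a_t)`: looking reveals the hidden state,
the step-2 percept is the payoff determined by the hidden state and the action. -/
noncomputable def nlPe : LSt → List (LAct × LPer) → LAct → LPer → ℝ
  | LSt.E, [], LAct.B₁, LPer.pE => 1
  | LSt.E, [], LAct.B₁, _ => 0
  | LSt.F, [], LAct.B₁, LPer.pF => 1
  | LSt.F, [], LAct.B₁, _ => 0
  | _, [], LAct.B₂, LPer.p0 => 1
  | _, [], LAct.B₂, _ => 0
  | LSt.E, _, LAct.B₁, LPer.O0 => 1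
  | LSt.E, _, LAct.B₂, LPer.OT => 1
  | LSt.F, _, LAct.B₁, LPer.OM => 1
  | LSt.F, _, LAct.B₂, LPer.OMT => 1
  | _, _, _, _ => 0

/-- The Newcomb-with-looking environment model, lifetime `m = 2`. -/
noncomputable def nlEnv : Env LSt LAct LPer 2 where
  prior := fun _ => 1 / 2
  pa := nlPa
  pe := nlPe
  prior_nonneg := by intro s; norm_num
  prior_sum := by
    rw [show (Finset.univ : Finset LSt) = {LSt.E, LSt.F} by decide,
      Finset.sum_insert (by decide), Finset.sum_singleton]
    norm_num
  pa_nonneg := by intro s h a; unfold nlPa; split <;> norm_num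
  pa_sum := by
    intro s h hlen
    rw [show (Finset.univ : Finset LAct) = {LAct.B₁, LAct.B₂} by decide,
      Finset.sum_insert (by decide), Finset.sum_singleton]
    rcases h with _ | ⟨⟨a1, e1⟩, _ | ⟨p, t⟩⟩
    · cases s <;> norm_num [nlPa]
    · cases s <;> cases a1 <;> cases e1 <;> norm_num [nlPa]
    · simp only [List.length_cons] at hlen; omega
  pe_nonneg := by intro s h a e; unfold nlPe; split <;> norm_num
  pe_sum := by
    intro s h a hlen
    rw [show (Finset.univ : Finset LPer) =
        {LPer.pE, LPer.pF, LPer.p0, LPer.O0, LPer.OT, LPer.OM, LPer.OMT} by decide,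
      Finset.sum_insert (by decide), Finset.sum_insert (by decide),
      Finset.sum_insert (by decide), Finset.sum_insert (by decide),
      Finset.sum_insert (by decide), Finset.sum_insert (by decide),
      Finset.sum_singleton]
    rcases h with _ | ⟨⟨a1, e1⟩, _ | ⟨p, t⟩⟩
    · cases s <;> cases a <;> norm_num [nlPe]
    · cases s <;> cases a <;> cases a1 <;> cases e1 <;> norm_num [nlPe]
    · simp only [List.length_cons] at hlen; omega
  action_pos := by
    intro s h a hlen hpos
    unfold nlPa; split <;> norm_num

/-- The utility function of the Newcomb-with-looking problem. -/
noncomputable def nlU : LPer → ℝ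
  | LPer.pE => 0
  | LPer.pF => 0
  | LPer.p0 => 0
  | LPer.O0 => 0
  | LPer.OT => 1000
  | LPer.OM => 1000000
  | LPer.OMT => 1001000

/-- The curious one-boxer: look, then always one-box. -/
def nlCur1 : List (LAct × LPer) → LAct := fun _ => LAct.B₁

/-- The curious two-boxer: look, then always two-box. -/
def nlCur2 : List (LAct × LPer) → LAct
  | [] => LAct.B₁
  | _ => LAct.B₂

/-- The incurious one-boxer: don't look, then one-box. -/
def nlInc1 : List (LAct × LPer) → LAct
  | [] => LAct.B₂
  | _ => LAct.B₁

/-- The incurious two-boxer: don't look, then two-box. -/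
def nlInc2 : List (LAct × LPer) → LAct := fun _ => LAct.B₂

/-- The paradox-lover: look, then one-box iff the box is empty. -/
def nlPara : List (LAct × LPer) → LAct
  | [] => LAct.B₁
  | [(_, LPer.pE)] => LAct.B₁
  | _ => LAct.B₂

/-- The fatalistic policy: look, then one-box iff the box is full. -/
def nlFatal : List (LAct × LPer) → LAct
  | [] => LAct.B₁
  | [(_, LPer.pF)] => LAct.B₁
  | _ => LAct.B₂

/-! The action-evidential value conditions on the agent's own step-2 action, which the
predictor anticipated: without looking, one-boxing is evidence for a full box with weight
`0.99`, but after looking the content of the box is known and the action carries no further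
evidence. The policy-evidential value conditions instead on the event that the whole policy
is followed, so it also weighs each step-1 percept by the predictor's probability of the
action the policy then takes: for the curious one-boxer this makes "full" 99 times as likely
as "empty", exactly as for the incurious one-boxer. -/

theorem wSuf_append_singleton {S A E : Type*} (pa : S → List (A × E) → A → ℝ)
    (pe : S → List (A × E) → A → E → ℝ) (s : S) (pre h : List (A × E)) (a : A) (e : E) :
    wSuf pa pe s pre (h ++ [(a, e)]) =
      wSuf pa pe s pre h * pa s (pre ++ h) a * pe s (pre ++ h) a e := by
  induction h generalizing pre with
  | nil => simp [wSuf]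
  | cons p h ih =>
    obtain ⟨b, f⟩ := p
    simp only [List.cons_append, List.nil_append, List.append_assoc, wSuf, ih]
    ring

namespace Env

variable {S A E : Type*} [Fintype S] [Fintype A] [Fintype E] {m : ℕ}

theorem hw_append_singleton (μ : Env S A E m) (s : S) (h : List (A × E)) (a : A) (e : E) :
    μ.hw s (h ++ [(a, e)]) = μ.hw s h * μ.pa s h a * μ.pe s h a e := by
  simp only [hw, wSuf_append_singleton, List.nil_append]
  ring

theorem sum_probH_append_singleton (μ : Env S A E m) {h : List (A × E)} (hh : h.length < m)
    (a : A) : ∑ e, μ.probH (h ++ [(a, e)]) = μ.probHA h a := by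
  simp only [probH, probHA, hw_append_singleton]
  rw [Finset.sum_comm]
  refine Finset.sum_congr rfl fun s _ => ?_
  rw [← Finset.mul_sum, μ.pe_sum s h a hh, mul_one]

open Classical in
theorem evP_eq_sum_sum (μ : Env S A E 2) (Q : (Fin 2 → A × E) → Prop) :
    μ.evP Q = ∑ x, ∑ y, if Q ![x, y] then μ.probH [x, y] else 0 := by
  rw [evP, ← Fintype.sum_prod_type']
  refine Fintype.sum_equiv (finTwoArrowEquiv (A × E)) _ _ fun τ => ?_
  have hτ : ![τ 0, τ 1] = τ := by funext i; fin_cases i <;> rfl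
  simp [List.ofFn_succ, hτ]

theorem sum_probH_pair (μ : Env S A E 2) (p : A × E) (b : A) :
    ∑ e, μ.probH [p, (b, e)] = μ.probHA [p] b :=
  μ.sum_probH_append_singleton (h := [p]) (by simp) b

theorem condPevA_nil (μ : Env S A E 2) (π : List (A × E) → A) (a : A) (e : E) :
    μ.condPevA π [] a e =
      μ.probHA [(a, e)] (π [(a, e)]) / ∑ x, μ.probHA [(a, x)] (π [(a, x)]) := by
  rw [condPevA, evP_eq_sum_sum, evP_eq_sum_sum]
  classical
  simp [ExtendsH, FollowsFrom, ActAt, Fin.forall_fin_two, List.ofFn_succ, ite_and,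
    Fintype.sum_prod_type_right, sum_probH_pair]

/-- At the last step no future action remains to be conditioned on. -/
theorem condPevA_singleton (μ : Env S A E 2) (π : List (A × E) → A) (a b : A) (e e' : E) :
    μ.condPevA π [(a, e)] b e' = μ.condE [(a, e)] b e' := by
  rw [condPevA, evP_eq_sum_sum, evP_eq_sum_sum, condE]
  classical
  simp [ExtendsH, FollowsFrom, ActAt, Fin.forall_fin_two, List.ofFn_succ, ite_and,
    Fintype.sum_prod_type_right, sum_probH_pair]

end Env

theorem LSt.sum_univ {M : Type*} [AddCommMonoid M] (f : LSt → M) :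
    ∑ s, f s = f .E + f .F :=
  Finset.sum_pair (by decide)

theorem LPer.sum_univ {M : Type*} [AddCommMonoid M] (f : LPer → M) :
    ∑ e, f e = f .pE + f .pF + f .p0 + f .O0 + f .OT + f .OM + f .OMT := by
  change ∑ e ∈ {.pE, .pF, .p0, .O0, .OT, .OM, .OMT}, f e = _
  simp [add_assoc]

theorem nlEnv_Vaev_values :
    nlEnv.Vaev nlU nlCur1 2 [] = 500000 ∧ nlEnv.Vaev nlU nlCur2 2 [] = 501000 ∧
    nlEnv.Vaev nlU nlInc1 2 [] = 990000 ∧ nlEnv.Vaev nlU nlInc2 2 [] = 11000 ∧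
    nlEnv.Vaev nlU nlPara 2 [] = 500500 ∧ nlEnv.Vaev nlU nlFatal 2 [] = 500500 := by
  refine ⟨?_, ?_, ?_, ?_, ?_, ?_⟩ <;>
  simp only [Env.Vaev, Env.VaevA, Env.condE, Env.probH, Env.probHA, Env.hw, nlEnv,
    LPer.sum_univ, LSt.sum_univ, wSuf, nlCur1, nlCur2, nlInc1, nlInc2, nlPara, nlFatal,
    List.nil_append, List.cons_append, nlPa, nlPe, nlU] <;>
  norm_num

theorem nlEnv_Vpev_values :
    nlEnv.Vpev nlU nlCur1 2 [] = 990000 ∧ nlEnv.Vpev nlU nlCur2 2 [] = 11000 ∧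
    nlEnv.Vpev nlU nlInc1 2 [] = 990000 ∧ nlEnv.Vpev nlU nlInc2 2 [] = 11000 ∧
    nlEnv.Vpev nlU nlPara 2 [] = 500500 ∧ nlEnv.Vpev nlU nlFatal 2 [] = 500500 := by
  refine ⟨?_, ?_, ?_, ?_, ?_, ?_⟩ <;>
  simp only [Env.Vpev, Env.VpevA, Env.condPevA_nil, Env.condPevA_singleton, Env.condE,
    Env.probH, Env.probHA, Env.hw, nlEnv, LPer.sum_univ, LSt.sum_univ, wSuf,
    nlCur1, nlCur2, nlInc1, nlInc2, nlPara, nlFatal,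
    List.nil_append, List.cons_append, nlPa, nlPe, nlU] <;>
  norm_num

/-- **Newcomb with looking, evidential values** (ε = 0.01): from the empty history, the
action-evidential values of the six deterministic policies (curious one-boxer, curious
two-boxer, incurious one-boxer, incurious two-boxer, paradox-lover, fatalistic) are
500000, 501000, 990000, 11000, 500500, 500500, and their policy-evidential values are
990000, 11000, 990000, 11000, 500500, 500500. In particular the incurious one-boxer
uniquely maximizes `V^{aev}`, while the curious and incurious one-boxers maximize
`V^{pev}`. -/
theorem newcomb_with_looking_evidential :
    (nlEnv.Vaev nlU nlCur1 2 [] = 500000 ∧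
     nlEnv.Vaev nlU nlCur2 2 [] = 501000 ∧
     nlEnv.Vaev nlU nlInc1 2 [] = 990000 ∧
     nlEnv.Vaev nlU nlInc2 2 [] = 11000 ∧
     nlEnv.Vaev nlU nlPara 2 [] = 500500 ∧
     nlEnv.Vaev nlU nlFatal 2 [] = 500500) ∧
    (nlEnv.Vpev nlU nlCur1 2 [] = 990000 ∧
     nlEnv.Vpev nlU nlCur2 2 [] = 11000 ∧
     nlEnv.Vpev nlU nlInc1 2 [] = 990000 ∧
     nlEnv.Vpev nlU nlInc2 2 [] = 11000 ∧
     nlEnv.Vpev nlU nlPara 2 [] = 500500 ∧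
     nlEnv.Vpev nlU nlFatal 2 [] = 500500) ∧
    (nlEnv.Vaev nlU nlCur1 2 [] < nlEnv.Vaev nlU nlInc1 2 [] ∧
     nlEnv.Vaev nlU nlCur2 2 [] < nlEnv.Vaev nlU nlInc1 2 [] ∧
     nlEnv.Vaev nlU nlInc2 2 [] < nlEnv.Vaev nlU nlInc1 2 [] ∧
     nlEnv.Vaev nlU nlPara 2 [] < nlEnv.Vaev nlU nlInc1 2 [] ∧
     nlEnv.Vaev nlU nlFatal 2 [] < nlEnv.Vaev nlU nlInc1 2 []) ∧
    (nlEnv.Vpev nlU nlCur1 2 [] = nlEnv.Vpev nlU nlInc1 2 [] ∧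
     nlEnv.Vpev nlU nlCur2 2 [] < nlEnv.Vpev nlU nlCur1 2 [] ∧
     nlEnv.Vpev nlU nlInc2 2 [] < nlEnv.Vpev nlU nlCur1 2 [] ∧
     nlEnv.Vpev nlU nlPara 2 [] < nlEnv.Vpev nlU nlCur1 2 [] ∧
     nlEnv.Vpev nlU nlFatal 2 [] < nlEnv.Vpev nlU nlCur1 2 []) := by
  obtain ⟨a₁, a₂, a₃, a₄, a₅, a₆⟩ := nlEnv_Vaev_values
  obtain ⟨p₁, p₂, p₃, p₄, p₅, p₆⟩ := nlEnv_Vpev_values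
  rw [a₁, a₂, a₃, a₄, a₅, a₆, p₁, p₂, p₃, p₄, p₅, p₆]
  norm_num
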